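/- Under Assumption (Hypfct), the value function at zero consortium value satisfies v(0) = (1/δ)·sup_{0≤x≤r̄−k}(φ(h⁻¹(U(x))) − x), and this supremum is attained by a constant contract (r̂, â) with â = h⁻¹(U(r̂−k)). -/

import Mathlib

open MeasureTheory Set Filter

/-!
A contract paying `R` and asking effort `A` with `h A ≤ U (R - k)` pays the public at most
`φ (h⁻¹ (U (R - k))) - (R - k)` at every instant, so discounting bounds `v 0` by `1/δ` times the
static supremum, and a constant contract at a maximiser attains it. The maximum exists although
`U` may jump at `0`: by the Inada condition, `x ↦ φ (h⁻¹ (U x)) - x` is increasing near `0`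
(there `U` grows faster than any line, while the concave increasing `φ ∘ h⁻¹` has slopes bounded
away from `0`), and it is continuous elsewhere.
-/

lemma ConvexOn.tendsto_atTop_of_tendsto_deriv {h : ℝ → ℝ} {a : ℝ}
    (hconv : ConvexOn ℝ (Ici a) h)
    (hd : Differentiable ℝ h) (hh' : Tendsto (deriv h) atTop atTop) :
    Tendsto h atTop atTop := by
  obtain ⟨t, ht1, hta⟩ :=
    ((hh'.eventually (eventually_ge_atTop 1)).and (eventually_ge_atTop a)).exists
  refine tendsto_atTop_mono' atTop ?_ (tendsto_atTop_add_const_left atTop (h t - t) tendsto_id)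
  filter_upwards [eventually_gt_atTop t] with s hts
  have hslope := ht1.trans (hconv.deriv_le_slope hta (hta.trans hts.le) hts (hd t))
  rw [slope_def_field, le_div_iff₀ (sub_pos.2 hts)] at hslope
  simp only [id]
  linarith

lemma ConvexOn.surjOn_Ici {h : ℝ → ℝ} {a : ℝ} (hconv : ConvexOn ℝ (Ici a) h)
    (hd : Differentiable ℝ h) (hh' : Tendsto (deriv h) atTop atTop) :
    SurjOn h (Ici a) (Ici (h a)) :=
  intermediate_value_Ici hd.continuous.continuousOn (hconv.tendsto_atTop_of_tendsto_deriv hd hh')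

lemma Set.RightInvOn.strictMonoOn_of_monotoneOn {α β : Type*} [LinearOrder α] [Preorder β]
    {f : α → β} {g : β → α} {s : Set α} {t : Set β} (hright : RightInvOn g f t)
    (hmono : MonotoneOn f s) (hg : MapsTo g t s) : StrictMonoOn g t := by
  intro x hx y hy hxy
  by_contra! hle
  have := hmono (hg hy) (hg hx) hle
  rw [hright hx, hright hy] at this
  exact hxy.not_ge this

lemma ConvexOn.concaveOn_of_invOn {𝕜 : Type*} [Field 𝕜] [LinearOrder 𝕜]
    [IsStrictOrderedRing 𝕜] {f g : 𝕜 → 𝕜} {s t : Set 𝕜} (hconv : ConvexOn 𝕜 s f)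
    (hmono : MonotoneOn f s) (ht : Convex 𝕜 t) (hinv : InvOn g f s t) (hf : MapsTo f s t)
    (hg : MapsTo g t s) :
    ConcaveOn 𝕜 t g := by
  refine ⟨ht, fun x hx y hy α β hα hβ hαβ ↦ ?_⟩
  have hgmono := (hinv.2.strictMonoOn_of_monotoneOn hmono hg).monotoneOn
  have hsum := hconv.1 (hg hx) (hg hy) hα hβ hαβ
  calc α • g x + β • g y = g (f (α • g x + β • g y)) := (hinv.1 hsum).symm
    _ ≤ g (α • x + β • y) := by
      refine hgmono (hf hsum) (ht hx hy hα hβ hαβ) ?_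
      simpa only [hinv.2 hx, hinv.2 hy] using hconv.2 (hg hx) (hg hy) hα hβ hαβ

lemma ConcaveOn.comp_invOn_of_convexOn {𝕜 : Type*} [Field 𝕜] [LinearOrder 𝕜]
    [IsStrictOrderedRing 𝕜] {φ f g : 𝕜 → 𝕜} {s t : Set 𝕜} (hφ : ConcaveOn 𝕜 s φ)
    (hφmono : MonotoneOn φ s) (hconv : ConvexOn 𝕜 s f) (hmono : MonotoneOn f s)
    (ht : Convex 𝕜 t) (hinv : InvOn g f s t) (hf : MapsTo f s t) (hg : MapsTo g t s) :
    ConcaveOn 𝕜 t (φ ∘ g) := by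
  have himg : g '' t = s := hg.image_subset.antisymm (hinv.1.surjOn hf)
  refine ConcaveOn.comp ?_ (hconv.concaveOn_of_invOn hmono ht hinv hf hg) ?_ <;> rw [himg]
  exacts [hφ, hφmono]

lemma ConcaveOn.exists_pos_mul_sub_le_sub {f : ℝ → ℝ} {a B : ℝ}
    (hf : ConcaveOn ℝ (Ici a) f)
    (hmono : StrictMonoOn f (Ici a)) (hB : a ≤ B) :
    ∃ c > 0, ∀ u v, a ≤ u → u < v → v ≤ B → c * (v - u) ≤ f v - f u := by
  have hB1 : a ≤ B + 1 := by linarith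
  refine ⟨slope f B (B + 1), ?_, fun u v hu huv hvB ↦ ?_⟩
  · rw [slope_def_field]
    exact div_pos (sub_pos.2 (hmono hB hB1 (by linarith))) (by linarith)
  have h₁ : slope f u (B + 1) ≤ slope f u v :=
    hf.slope_anti hu ⟨hu.trans huv.le, huv.ne'⟩ ⟨hB1, ne_of_gt (by linarith)⟩ (by linarith)
  have h₂ : slope f (B + 1) B ≤ slope f (B + 1) u :=
    hf.slope_anti hB1 ⟨hu, ne_of_lt (by linarith)⟩ ⟨hB, ne_of_lt (by linarith)⟩
      (by linarith)
  have hslope : slope f B (B + 1) ≤ (f v - f u) / (v - u) := by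
    rw [← slope_def_field, slope_comm f B]
    exact h₂.trans ((slope_comm f _ _).trans_le h₁)
  rwa [le_div_iff₀ (sub_pos.2 huv)] at hslope

lemma ConcaveOn.exists_mul_sub_le_sub_of_tendsto_deriv {U : ℝ → ℝ} {a : ℝ}
    (hU : ConcaveOn ℝ (Ici a) U) (hd : DifferentiableOn ℝ U (Ioi a))
    (hinada : Tendsto (deriv U) (nhdsWithin a (Ioi a)) atTop) (C : ℝ) :
    ∃ ε > a, ∀ x y, a < x → x < y → y ≤ ε → C * (y - x) ≤ U y - U x := by
  obtain ⟨ε, hε, hsub⟩ :=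
    mem_nhdsGT_iff_exists_Ioc_subset.1 (hinada.eventually (eventually_ge_atTop C))
  refine ⟨ε, hε, fun x y hx hxy hyε ↦ ?_⟩
  have hy : a < y := hx.trans hxy
  have hslope : C ≤ slope U x y :=
    (hsub ⟨hy, hyε⟩).trans (hU.deriv_le_slope (le_of_lt hx) (le_of_lt hy) hxy
      (hd.differentiableAt (Ioi_mem_nhds hy)))
  rwa [slope_def_field, le_div_iff₀ (sub_pos.2 hxy)] at hslope

lemma exists_monotoneOn_Ioc_comp_sub {U ψ : ℝ → ℝ} {a : ℝ} (hU : ConcaveOn ℝ (Ici a) U)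
    (hUmono : MonotoneOn U (Ici a)) (hUd : DifferentiableOn ℝ U (Ioi a))
    (hinada : Tendsto (deriv U) (nhdsWithin a (Ioi a)) atTop)
    (hψ : ConcaveOn ℝ (Ici (U a)) ψ) (hψmono : StrictMonoOn ψ (Ici (U a))) :
    ∃ ε > a, MonotoneOn (fun x ↦ ψ (U x) - x) (Ioc a ε) := by
  have ha1 : a ≤ a + 1 := by linarith
  obtain ⟨c, hc, hψslope⟩ :=
    hψ.exists_pos_mul_sub_le_sub hψmono (hUmono self_mem_Ici ha1 ha1)
  obtain ⟨ε, hε, hUslope⟩ := hU.exists_mul_sub_le_sub_of_tendsto_deriv hUd hinada c⁻¹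
  refine ⟨min ε (a + 1), lt_min hε (by linarith), fun x hx y hy hxy ↦ ?_⟩
  rcases hxy.eq_or_lt with rfl | hlt
  · rfl
  have hUxy := hUslope x y hx.1 hlt (hy.2.trans (min_le_left _ _))
  have hUx : U a ≤ U x := hUmono self_mem_Ici (le_of_lt hx.1) (le_of_lt hx.1)
  have hUy : U y ≤ U (a + 1) := hUmono (le_of_lt hy.1) ha1 (hy.2.trans (min_le_right _ _))
  have hpos : 0 < c⁻¹ * (y - x) := mul_pos (inv_pos.2 hc) (sub_pos.2 hlt)
  have hψxy := hψslope (U x) (U y) hUx (by linarith) hUy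
  have : y - x ≤ c * (U y - U x) := by
    calc y - x = c * (c⁻¹ * (y - x)) := by field_simp
      _ ≤ c * (U y - U x) := by gcongr
  dsimp only
  linarith

lemma exists_isMaxOn_Icc_of_monotoneOn_Ioc {g : ℝ → ℝ} {a b ε : ℝ} (hab : a < b)
    (hε : a < ε) (hcont : ContinuousOn g (Ioc a b)) (hmono : MonotoneOn g (Ioc a ε)) :
    ∃ x ∈ Icc a b, IsMaxOn g (Icc a b) x := by
  set ε' := min ε b
  have hε' : a < ε' := lt_min hε hab
  obtain ⟨m, hm, hmax⟩ := isCompact_Icc.exists_isMaxOn (nonempty_Icc.2 (min_le_right ε b))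
    (hcont.mono fun x hx ↦ ⟨hε'.trans_le hx.1, hx.2⟩)
  have hle : ∀ z ∈ Icc a b, a < z → g z ≤ g m := by
    intro z hz haz
    rcases le_total z ε' with hzε | hzε
    · exact (hmono ⟨haz, hzε.trans (min_le_left _ _)⟩ ⟨hε', min_le_left _ _⟩ hzε).trans
        (hmax ⟨le_rfl, min_le_right _ _⟩)
    · exact hmax ⟨hzε, hz.2⟩
  rcases le_total (g a) (g m) with ham | hma
  · refine ⟨m, ⟨hε'.le.trans hm.1, hm.2⟩, isMaxOn_iff.2 fun z hz ↦ ?_⟩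
    rcases hz.1.eq_or_lt with rfl | haz
    exacts [ham, hle z hz haz]
  · refine ⟨a, left_mem_Icc.2 hab.le, isMaxOn_iff.2 fun z hz ↦ ?_⟩
    rcases hz.1.eq_or_lt with rfl | haz
    exacts [le_rfl, (hle z hz haz).trans hma]

lemma exists_isMaxOn_Icc_comp_sub {U ψ : ℝ → ℝ} {a b : ℝ} (hab : a < b)
    (hU : ConcaveOn ℝ (Ici a) U) (hUmono : StrictMonoOn U (Ici a))
    (hUd : DifferentiableOn ℝ U (Ioi a)) (hinada : Tendsto (deriv U) (nhdsWithin a (Ioi a)) atTop)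
    (hψ : ConcaveOn ℝ (Ici (U a)) ψ) (hψmono : StrictMonoOn ψ (Ici (U a))) :
    ∃ x ∈ Icc a b, IsMaxOn (fun x ↦ ψ (U x) - x) (Icc a b) x := by
  obtain ⟨ε, hε, hmono⟩ :=
    exists_monotoneOn_Ioc_comp_sub hU hUmono.monotoneOn hUd hinada hψ hψmono
  refine exists_isMaxOn_Icc_of_monotoneOn_Ioc hab hε ?_ hmono
  have hψcont : ContinuousOn ψ (Ioi (U a)) := by
    simpa only [interior_Ici] using hψ.continuousOn_interior
  exact (hψcont.comp (hUd.continuousOn.mono Ioc_subset_Ioi_self)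
    fun x hx ↦ hUmono self_mem_Ici (le_of_lt hx.1) hx.1).sub continuousOn_id

lemma integral_exp_neg_mul_Ioi_zero {δ : ℝ} (hδ : 0 < δ) :
    ∫ s in Ioi (0 : ℝ), Real.exp (-δ * s) = 1 / δ := by
  rw [integral_exp_mul_Ioi (neg_lt_zero.2 hδ), mul_zero, Real.exp_zero, neg_div_neg_eq]

lemma integral_exp_neg_mul_mem_Icc {δ L M : ℝ} (hδ : 0 < δ) {f : ℝ → ℝ}
    (hf : AEStronglyMeasurable f (volume.restrict (Ioi 0)))
    (hfb : ∀ᵐ s ∂volume.restrict (Ioi 0), f s ∈ Icc L M) :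
    ∫ s in Ioi (0 : ℝ), Real.exp (-δ * s) * f s ∈ Icc (1 / δ * L) (1 / δ * M) := by
  have hexp := exp_neg_integrableOn_Ioi 0 hδ
  have hint : IntegrableOn (fun s ↦ Real.exp (-δ * s) * f s) (Ioi 0) := by
    refine (hexp.bdd_mul hf (c := max |L| |M|) ?_).congr (ae_of_all _ fun s ↦ mul_comm _ _)
    filter_upwards [hfb] with s hs using abs_le_max_abs_abs hs.1 hs.2
  have hconst (c : ℝ) : ∫ s in Ioi (0 : ℝ), Real.exp (-δ * s) * c = 1 / δ * c := by
    rw [integral_mul_const, integral_exp_neg_mul_Ioi_zero hδ]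
  constructor
  · rw [← hconst]
    refine integral_mono_ae (hexp.mul_const L) hint ?_
    filter_upwards [hfb] with s hs using mul_le_mul_of_nonneg_left hs.1 (Real.exp_pos _).le
  · rw [← hconst]
    refine integral_mono_ae hint (hexp.mul_const M) ?_
    filter_upwards [hfb] with s hs using mul_le_mul_of_nonneg_left hs.2 (Real.exp_pos _).le

lemma integral_integral_exp_neg_mul_le {Ω : Type*} [MeasurableSpace Ω] {μ : Measure Ω}
    [IsProbabilityMeasure μ] {δ L M : ℝ} (hδ : 0 < δ) {F : ℝ → Ω → ℝ}
    (hF : Measurable (Function.uncurry F))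
    (hFb : ∀ᵐ p ∂(volume.restrict (Ici (0 : ℝ))).prod μ, F p.1 p.2 ∈ Icc L M) :
    ∫ ω, (∫ s in Ioi (0 : ℝ), Real.exp (-δ * s) * F s ω) ∂μ ≤ 1 / δ * M := by
  have hFb' : ∀ᵐ ω ∂μ, ∀ᵐ s ∂volume.restrict (Ioi 0), F s ω ∈ Icc L M := by
    filter_upwards [Measure.ae_ae_of_ae_prod
      (Measure.measurePreserving_swap.quasiMeasurePreserving.ae hFb)] with ω hω
    exact ae_restrict_of_ae_restrict_of_subset Ioi_subset_Ici_self hω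
  have hI : ∀ᵐ ω ∂μ,
      ∫ s in Ioi (0 : ℝ), Real.exp (-δ * s) * F s ω ∈ Icc (1 / δ * L) (1 / δ * M) := by
    filter_upwards [hFb'] with ω hω
    exact integral_exp_neg_mul_mem_Icc hδ
      (hF.comp measurable_prodMk_right).aestronglyMeasurable hω
  have hImeas : StronglyMeasurable fun ω ↦ ∫ s in Ioi (0 : ℝ), Real.exp (-δ * s) * F s ω :=
    StronglyMeasurable.integral_prod_left (f := fun s ω ↦ Real.exp (-δ * s) * F s ω)
      (by fun_prop)
  have hIint := Integrable.of_bound hImeas.aestronglyMeasurable _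
    (hI.mono fun _ hω ↦ abs_le_max_abs_abs hω.1 hω.2)
  calc ∫ ω, (∫ s in Ioi (0 : ℝ), Real.exp (-δ * s) * F s ω) ∂μ
      ≤ ∫ _, 1 / δ * M ∂μ :=
        integral_mono_ae hIint (integrable_const _) (hI.mono fun _ hω ↦ hω.2)
    _ = 1 / δ * M := by simp

lemma isGreatest_discounted_values_of_constant {Ω : Type*} [MeasurableSpace Ω] (μ : Measure Ω)
    [IsProbabilityMeasure μ] {δ k rbar M : ℝ} (hδ : 0 < δ) {U φ h : ℝ → ℝ}
    (hφ : Measurable φ) (hφmono : MonotoneOn φ (Ici 0))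
    (hM : ∀ r a, k ≤ r → r ≤ rbar → 0 ≤ a → h a ≤ U (r - k) → φ a - r + k ≤ M)
    {rhat ahat : ℝ} (hr : rhat ∈ Icc k rbar) (ha : 0 ≤ ahat) (hbind : h ahat = U (rhat - k))
    (hval : φ ahat - rhat + k = M) :
    IsGreatest {J : ℝ | ∃ R A : ℝ → Ω → ℝ,
      Measurable (fun p : ℝ × Ω => R p.1 p.2) ∧ Measurable (fun p : ℝ × Ω => A p.1 p.2) ∧
      (∀ᵐ p ∂((volume.restrict (Ici (0:ℝ))).prod μ),
        0 ≤ A p.1 p.2 ∧ 0 ≤ U (R p.1 p.2 - k) - h (A p.1 p.2) ∧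
        k ≤ R p.1 p.2 ∧ R p.1 p.2 ≤ rbar) ∧
      (∫ ω, (∫ s in Ioi (0:ℝ), Real.exp (-δ * s) * (U (R s ω - k) - h (A s ω))) ∂μ) = 0 ∧
      J = ∫ ω, (∫ s in Ioi (0:ℝ), Real.exp (-δ * s) * (φ (A s ω) - R s ω + k)) ∂μ}
      (1 / δ * M) := by
  refine ⟨⟨fun _ _ ↦ rhat, fun _ _ ↦ ahat, measurable_const, measurable_const,
    ae_of_all _ fun _ ↦ ⟨ha, by rw [hbind, sub_self], hr.1, hr.2⟩, by simp [hbind], ?_⟩,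
    ?_⟩
  · simp only [hval, integral_mul_const, integral_exp_neg_mul_Ioi_zero hδ, integral_const,
      probReal_univ, one_smul]
  rintro J ⟨R, A, hR, hA, hae, -, rfl⟩
  refine integral_integral_exp_neg_mul_le (L := φ 0 - (rbar - k)) hδ
    (((hφ.comp hA).sub hR).add_const k) ?_
  filter_upwards [hae] with p ⟨hAp, hUh, hkR, hRr⟩
  have hφA : φ 0 ≤ φ (A p.1 p.2) := hφmono self_mem_Ici hAp hAp
  exact ⟨by linarith, hM _ _ hkR hRr hAp (sub_nonneg.1 hUh)⟩

theorem stmt_13_general {Ω : Type*} [MeasurableSpace Ω] (μ : Measure Ω) [IsProbabilityMeasure μ]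
    (δ k rbar : ℝ) (hδ : 0 < δ) (hkr : k < rbar)
    (U φ h hinv : ℝ → ℝ)
    (hUconc : StrictConcaveOn ℝ (Ici 0) U) (hUmono : StrictMonoOn U (Ici 0)) (hU0 : U 0 = 0)
    (hUd : DifferentiableOn ℝ U (Ioi 0))
    (hUInada0 : Tendsto (deriv U) (nhdsWithin 0 (Ioi 0)) atTop)
    (hφconc : StrictConcaveOn ℝ (Ici 0) φ) (hφmono : StrictMonoOn φ (Ici 0))
    (hφd : Differentiable ℝ φ)
    (hhconv : ConvexOn ℝ (Ici 0) h) (hhmono : MonotoneOn h (Ici 0)) (hh0 : h 0 = 0)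
    (hhd : Differentiable ℝ h)
    (hh'inf : Tendsto (deriv h) atTop atTop)
    (hinv_left : ∀ x ∈ Ici (0:ℝ), hinv (h x) = x)
    (hinv_right : ∀ y ∈ h '' Ici (0:ℝ), h (hinv y) = y)
    (v : ℝ → ℝ)
    (hv : ∀ x : ℝ, v x = sSup {J : ℝ | ∃ R A : ℝ → Ω → ℝ,
      Measurable (fun p : ℝ × Ω => R p.1 p.2) ∧ Measurable (fun p : ℝ × Ω => A p.1 p.2) ∧
      (∀ᵐ p ∂((volume.restrict (Ici (0:ℝ))).prod μ),
        0 ≤ A p.1 p.2 ∧ 0 ≤ U (R p.1 p.2 - k) - h (A p.1 p.2) ∧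
        k ≤ R p.1 p.2 ∧ R p.1 p.2 ≤ rbar) ∧
      (∫ ω, (∫ s in Ioi (0:ℝ), Real.exp (-δ * s) * (U (R s ω - k) - h (A s ω))) ∂μ) = x ∧
      J = ∫ ω, (∫ s in Ioi (0:ℝ), Real.exp (-δ * s) * (φ (A s ω) - R s ω + k)) ∂μ}) :
    v 0 = (1 / δ) * sSup ((fun x => φ (hinv (U x)) - x) '' Icc 0 (rbar - k)) ∧
    ∃ rhat ∈ Icc k rbar,
      φ (hinv (U (rhat - k))) - (rhat - k) =
        sSup ((fun x => φ (hinv (U x)) - x) '' Icc 0 (rbar - k)) := by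
  set g : ℝ → ℝ := fun x ↦ φ (hinv (U x)) - x
  have hleft : LeftInvOn hinv h (Ici 0) := fun x hx ↦ hinv_left x hx
  have hsurj : SurjOn h (Ici 0) (Ici 0) := by simpa only [hh0] using hhconv.surjOn_Ici hhd hh'inf
  have hmapsh : MapsTo h (Ici 0) (Ici 0) := fun x hx ↦ hh0 ▸ hhmono self_mem_Ici hx hx
  have hinvOn : InvOn hinv h (Ici 0) (Ici 0) := ⟨hleft, fun y hy ↦ hinv_right y (hsurj hy)⟩
  have hmaps : MapsTo hinv (Ici 0) (Ici 0) := hleft.mapsTo hsurj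
  have hinvmono := hinvOn.2.strictMonoOn_of_monotoneOn hhmono hmaps
  have hψ : ConcaveOn ℝ (Ici 0) (φ ∘ hinv) := hφconc.concaveOn.comp_invOn_of_convexOn
    hφmono.monotoneOn hhconv hhmono (convex_Ici 0) hinvOn hmapsh hmaps
  obtain ⟨x, hx, hmax⟩ := exists_isMaxOn_Icc_comp_sub (b := rbar - k) (sub_pos.2 hkr)
    hUconc.concaveOn hUmono hUd hUInada0 (by rwa [hU0])
    (by rw [hU0]; exact hφmono.comp hinvmono hmaps)
  have hsup : sSup (g '' Icc 0 (rbar - k)) = g x :=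
    IsGreatest.csSup_eq ⟨mem_image_of_mem g hx, forall_mem_image.2 (isMaxOn_iff.1 hmax)⟩
  have hUx : U x ∈ Ici 0 := hU0 ▸ hUmono.monotoneOn self_mem_Ici hx.1 hx.1
  have hxk : x + k ∈ Icc k rbar := ⟨by linarith [hx.1], by linarith [hx.2]⟩
  refine ⟨?_, x + k, hxk, by rw [hsup, add_sub_cancel_right]⟩
  rw [hv 0, hsup]
  refine (isGreatest_discounted_values_of_constant μ hδ hφd.continuous.measurable
    hφmono.monotoneOn (fun r a hr₁ hr₂ ha hha ↦ ?_) hxk (hmaps hUx)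
    (by rw [add_sub_cancel_right, hinvOn.2 hUx]) (by simp only [g]; ring)).csSup_eq
  have hUr : U (r - k) ∈ Ici 0 :=
    hU0 ▸ hUmono.monotoneOn self_mem_Ici (sub_nonneg.2 hr₁) (sub_nonneg.2 hr₁)
  have haU : a ≤ hinv (U (r - k)) := by
    simpa only [hleft ha] using hinvmono.monotoneOn (hmapsh ha) hUr hha
  calc φ a - r + k ≤ g (r - k) := by
        simp only [g]
        linarith [hφmono.monotoneOn ha (hmaps hUr) haU]
    _ ≤ g x := isMaxOn_iff.1 hmax _ ⟨sub_nonneg.2 hr₁, by linarith⟩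

/-- Under Assumption (Hypfct), the public value function at zero consortium
value satisfies v(0) = (1/δ)·sup_{0≤x≤r̄−k}(φ(h⁻¹(U(x))) − x), and this supremum is attained
by a constant contract (r̂, â) with â = h⁻¹(U(r̂−k)). -/
theorem stmt_13 {Ω : Type*} [MeasurableSpace Ω] (μ : Measure Ω) [IsProbabilityMeasure μ]
    (δ k rbar : ℝ) (hδ : 0 < δ) (hk : 0 < k) (hkr : k < rbar)
    (U φ h hinv : ℝ → ℝ)
    (hUconc : StrictConcaveOn ℝ (Ici 0) U) (hUmono : StrictMonoOn U (Ici 0)) (hU0 : U 0 = 0)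
    (hUd : DifferentiableOn ℝ U (Ioi 0))
    (hUInada0 : Tendsto (deriv U) (nhdsWithin 0 (Ioi 0)) atTop)
    (hUInadaInf : Tendsto (deriv U) atTop (nhds 0))
    (hφconc : StrictConcaveOn ℝ (Ici 0) φ) (hφmono : StrictMonoOn φ (Ici 0))
    (hφ0 : φ 0 = 0) (hφd : Differentiable ℝ φ)
    (hφ'inf : Tendsto (deriv φ) atTop (nhds 1))
    (hhconv : ConvexOn ℝ (Ici 0) h) (hhmono : MonotoneOn h (Ici 0)) (hh0 : h 0 = 0)
    (hhd : Differentiable ℝ h) (hh'0 : 0 < deriv h 0)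
    (hh'inf : Tendsto (deriv h) atTop atTop)
    (hinv_left : ∀ x ∈ Ici (0:ℝ), hinv (h x) = x)
    (hinv_right : ∀ y ∈ h '' Ici (0:ℝ), h (hinv y) = y)
    (v : ℝ → ℝ)
    (hv : ∀ x : ℝ, v x = sSup {J : ℝ | ∃ R A : ℝ → Ω → ℝ,
      Measurable (fun p : ℝ × Ω => R p.1 p.2) ∧ Measurable (fun p : ℝ × Ω => A p.1 p.2) ∧
      (∀ᵐ p ∂((volume.restrict (Ici (0:ℝ))).prod μ),
        0 ≤ A p.1 p.2 ∧ 0 ≤ U (R p.1 p.2 - k) - h (A p.1 p.2) ∧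
        k ≤ R p.1 p.2 ∧ R p.1 p.2 ≤ rbar) ∧
      (∫ ω, (∫ s in Ioi (0:ℝ), Real.exp (-δ * s) * (U (R s ω - k) - h (A s ω))) ∂μ) = x ∧
      J = ∫ ω, (∫ s in Ioi (0:ℝ), Real.exp (-δ * s) * (φ (A s ω) - R s ω + k)) ∂μ}) :
    v 0 = (1 / δ) * sSup ((fun x => φ (hinv (U x)) - x) '' Icc 0 (rbar - k)) ∧
    ∃ rhat ∈ Icc k rbar,
      φ (hinv (U (rhat - k))) - (rhat - k) =
        sSup ((fun x => φ (hinv (U x)) - x) '' Icc 0 (rbar - k)) :=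
  stmt_13_general μ δ k rbar hδ hkr U φ h hinv hUconc hUmono hU0 hUd hUInada0 hφconc hφmono hφd
    hhconv hhmono hh0 hhd hh'inf hinv_left hinv_right v hv
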